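/- Fix a sparsification ratio s ≥ 1 and suppose the surface-code distance d is large enough that the diluted lattice contains at least one complete plaquette of the sparsified pattern (d ≥ 2s + 4). Then the s-diluted lattice obtained by diagonal or Cartesian s-sparsification has girth exactly 2s + 4, i.e., its shortest cycle has length 2s + 4. -/

import Mathlib

open Finset

/-- Edges (physical qubits) of the canonical Z-decoding lattice of the distance-`d`
surface code.  The lattice consists of `d-1` rows of `d` Z-check vertices, with the
two rough boundaries at the top and the bottom.
* `vert g c` : vertical edge in vertical gap `g` and column `c`; gap `0` is the dangling
  edge on the top rough boundary, gap `d-1` is the dangling edge on the bottom rough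
  boundary, and gap `g` (for `0 < g < d-1`) joins the checks of rows `g-1` and `g`.
* `horiz r c` : horizontal edge in row `r` joining the checks of columns `c` and `c+1`.
There are `d^2 + (d-1)^2` edges, one for each physical qubit. -/
inductive Edge (d : ℕ) : Type where
  | vert  (g : Fin d) (c : Fin d)
  | horiz (r : Fin (d - 1)) (c : Fin (d - 1))
deriving DecidableEq

instance (d : ℕ) : Fintype (Edge d) :=
  Fintype.ofSurjective
    (fun x : (Fin d × Fin d) ⊕ (Fin (d - 1) × Fin (d - 1)) =>
      match x with
      | Sum.inl (g, c) => Edge.vert g c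
      | Sum.inr (r, c) => Edge.horiz r c)
    (by
      intro e
      cases e with
      | vert g c => exact ⟨Sum.inl (g, c), rfl⟩
      | horiz r c => exact ⟨Sum.inr (r, c), rfl⟩)

/-- Z-check vertices of the distance-`d` surface code: row `r ∈ Fin (d-1)`,
column `c ∈ Fin d`. -/
abbrev ZVertex (d : ℕ) := Fin (d - 1) × Fin d

/-- Incidence between an edge (qubit) and a Z-check vertex. -/
def incidentZ {d : ℕ} : Edge d → ZVertex d → Bool
  | .vert g c, (r, c') => c'.val == c.val && (g.val == r.val || g.val == r.val + 1)
  | .horiz rr cc, (r, c') => r.val == rr.val && (c'.val == cc.val || c'.val == cc.val + 1)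

/-- Syndrome of an X-error `e` (a set of edges): the parity, at each Z-check vertex,
of the number of incident error edges. -/
def syndrome {d : ℕ} (e : Finset (Edge d)) (v : ZVertex d) : ZMod 2 :=
  ((e.filter fun x => incidentZ x v = true).card : ZMod 2)

/-- Vertical edges in the top gap (crossing the cut just below the top rough
boundary). -/
def isTopVert {d : ℕ} : Edge d → Bool
  | .vert g _ => g.val == 0
  | .horiz _ _ => false

/-- Homological crossing parity of an edge set: the parity of the number of vertical
edges crossing the horizontal cut at the top rough boundary.  For an edge set with
zero syndrome, this parity is the same at every horizontal cut, and it vanishes iff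
the set contains no path joining the two rough boundaries, i.e. iff it lies in the
span of closed cycles and paths returning to the same boundary. -/
def crossing {d : ℕ} (e : Finset (Edge d)) : ZMod 2 :=
  ((e.filter fun x => isTopVert x = true).card : ZMod 2)

/-- `c` is logically equivalent to `e`: the symmetric difference `e ∆ c` contains no
path joining the two rough boundaries (expressed via the homological crossing
parity). -/
def LogEquiv {d : ℕ} (e c : Finset (Edge d)) : Prop :=
  crossing (symmDiff e c) = 0

/-- `c` is a correction for the error `e` supported on the subgraph with edge set
`S`: it consists of edges of `S` and reproduces the syndrome of `e`. -/
def IsCorrection {d : ℕ} (S e c : Finset (Edge d)) : Prop :=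
  c ⊆ S ∧ ∀ v, syndrome c v = syndrome e v

/-- `c` is a minimum-weight correction for `e` supported on `S` (what the ideal
decoder operating on `S` returns). -/
def IsMinCorrection {d : ℕ} (S e c : Finset (Edge d)) : Prop :=
  IsCorrection S e c ∧ ∀ c', IsCorrection S e c' → c.card ≤ c'.card

/-- The subgraph with edge set `S` corrects all errors of weight at most `t`:
every minimum-weight correction supported on `S` is logically equivalent to the
actual error. -/
def CorrectsUpTo {d : ℕ} (S : Finset (Edge d)) (t : ℕ) : Prop :=
  ∀ e c : Finset (Edge d), e.card ≤ t → IsMinCorrection S e c → LogEquiv e c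

/-- Error-correcting radius of the subgraph with edge set `S`: the largest `t` such
that every error of weight at most `t` is corrected, up to logical equivalence, by
the ideal decoder operating on `S`. -/
noncomputable def eccRadius {d : ℕ} (S : Finset (Edge d)) : ℕ :=
  sSup {t | CorrectsUpTo S t}

/-- Diagonal index of an edge: the edge with midpoint `(x, y)` lies on the diagonal
line `x + y = k - 1/2`, where `k` is the diagonal index. -/
def diagIndex {d : ℕ} : Edge d → ℕ
  | .vert g c => g.val + c.val
  | .horiz r c => r.val + c.val + 1

/-- Diagonal `s`-sparsification, pattern `D_H`: keep all vertical edges and exactly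
the horizontal edges lying on the retained diagonals `D_k`, `k ≡ 0 (mod s+1)`. -/
def keepDH {d : ℕ} (s : ℕ) : Edge d → Bool
  | .vert _ _ => true
  | .horiz r c => (r.val + c.val + 1) % (s + 1) == 0

def dilutedDH (d s : ℕ) : Finset (Edge d) :=
  univ.filter fun e => keepDH s e = true

/-- Cartesian `s`-sparsification of the horizontal grid lines, pattern `C_H`: keep all
vertical edges and exactly the horizontal edges on retained lines `C_k`,
`k ≡ 1 (mod s+1)`. -/
def keepCH {d : ℕ} (s : ℕ) : Edge d → Bool
  | .vert _ _ => true
  | .horiz r _ => r.val % (s + 1) == 1 % (s + 1)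

def dilutedCH (d s : ℕ) : Finset (Edge d) :=
  univ.filter fun e => keepCH s e = true

/-- The simple graph on the Z-check vertices determined by an edge (qubit) set `S`:
two distinct checks are adjacent iff some edge of `S` is incident to both. -/
def latticeGraph (d : ℕ) (S : Finset (Edge d)) : SimpleGraph (ZVertex d) where
  Adj v w := v ≠ w ∧ ∃ e ∈ S, incidentZ e v = true ∧ incidentZ e w = true
  symm := by
    constructor
    rintro v w ⟨hne, e, he, hv, hw⟩
    exact ⟨hne.symm, e, he, hw, hv⟩
  loopless := by
    constructor
    rintro v ⟨hne, -⟩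
    exact hne rfl

section General
open SimpleGraph
variable {V : Type*} {G : SimpleGraph V}

lemma walk_const {β : Type*} (f : V → β) {u v : V} (w : G.Walk u v)
    (h : ∀ dt ∈ w.darts, f dt.fst = f dt.snd) :
    ∀ x ∈ w.support, f x = f u := by
  induction w with
  | nil => intro x hx; simp at hx; subst hx; rfl
  | @cons u v' v hadj p ih =>
    intro x hx
    rw [Walk.support_cons] at hx
    rcases List.mem_cons.mp hx with rfl | hx
    · rfl
    · have h0 : f u = f v' := h ⟨(u, v'), hadj⟩ (by rw [Walk.darts_cons]; exact List.mem_cons_self)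
      have := ih (fun dt hdt => h dt (by rw [Walk.darts_cons]; exact List.mem_cons_of_mem _ hdt)) x hx
      rw [this, ← h0]

lemma walk_parity (f : V → ZMod 2) {u v : V} (w : G.Walk u v) :
    ((w.darts.countP fun dt => decide (f dt.fst ≠ f dt.snd)) : ZMod 2) = f v - f u := by
  induction w with
  | nil => simp
  | @cons u v' v hadj p ih =>
    rw [Walk.darts_cons, List.countP_cons, Nat.cast_add, ih]
    by_cases hf : f u = f v'
    · simp [hf]
    · have h1 : f v' - f u = 1 := by
        revert hf; generalize f u = x; generalize f v' = y; revert x y; decide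
      have h2 : f v - f v' + (1 : ZMod 2) = f v - f u := by rw [← h1]; ring
      simpa [hf] using h2

lemma closed_walk_even (f : V → ZMod 2) {u : V} (w : G.Walk u u) :
    2 ∣ (w.darts.countP fun dt => decide (f dt.fst ≠ f dt.snd)) := by
  have := walk_parity f w
  rw [sub_self] at this
  exact (ZMod.natCast_eq_zero_iff _ 2).mp this

lemma nonconst_one_le (f : V → ZMod 2) {u : V} (w : G.Walk u u)
    {x y : V} (hx : x ∈ w.support) (hy : y ∈ w.support) (hxy : f x ≠ f y) :
    1 ≤ (w.darts.countP fun dt => decide (f dt.fst ≠ f dt.snd)) := by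
  by_contra h
  push_neg at h
  rw [Nat.lt_one_iff] at h
  have hall := List.countP_eq_zero.mp h
  have hc := walk_const f w (fun dt hdt => by
    by_contra hne
    exact absurd (by simpa using hne) (by simpa using hall dt hdt))
  exact hxy ((hc x hx).trans (hc y hy).symm)

lemma nodup_len_le_one {α : Type*} {l : List α} (h : l.Nodup) (he : ∀ x ∈ l, ∀ y ∈ l, x = y) :
    l.length ≤ 1 := by
  match l with
  | [] => simp
  | [a] => simp
  | a :: b :: t =>
    exfalso
    rw [List.nodup_cons] at h
    have hab := he a (by simp) b (by simp)
    exact h.1 (by rw [hab]; exact List.mem_cons_self)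

lemma countP_le_one_of {α β : Type*} (l : List α) (g : α → β) (hn : (l.map g).Nodup)
    (p : α → Bool) (hp : ∀ x ∈ l, ∀ y ∈ l, p x → p y → g x = g y) : l.countP p ≤ 1 := by
  rw [List.countP_eq_length_filter]
  have hsub : List.Sublist (l.filter p) l := List.filter_sublist
  have hn2 : ((l.filter p).map g).Nodup := (hsub.map g).nodup hn
  have hlen : ((l.filter p).map g).length ≤ 1 := by
    refine nodup_len_le_one hn2 ?_
    intro x hx y hy
    obtain ⟨x', hx', rfl⟩ := List.mem_map.mp hx
    obtain ⟨y', hy', rfl⟩ := List.mem_map.mp hy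
    exact hp x' (hsub.subset hx') y' (hsub.subset hy')
      (List.of_mem_filter hx') (List.of_mem_filter hy')
  simpa using hlen

lemma sum_countP_le {α β : Type*} [DecidableEq β] (l : List α) (g : α → β) (T : Finset β) :
    ∑ t ∈ T, l.countP (fun x => decide (g x = t)) ≤ l.length := by
  induction l with
  | nil => simp
  | cons a l ih =>
    simp only [List.countP_cons, List.length_cons, Finset.sum_add_distrib]
    have h2 : ∑ t ∈ T, (if (fun x => decide (g x = t)) a = true then 1 else 0) ≤ 1 := by
      have heq : ∑ t ∈ T, (if (fun x => decide (g x = t)) a = true then 1 else 0)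
           = ∑ t ∈ T, (if g a = t then 1 else 0) := by
        apply Finset.sum_congr rfl; intro t _; simp
      rw [heq, Finset.sum_ite_eq T (g a) (fun _ => 1)]
      split <;> omega
    exact Nat.add_le_add ih h2

end General

section AdjIff
open SimpleGraph
variable {d : ℕ} {S : Finset (Edge d)} {HQ : ℕ → ℕ → Prop}

lemma vertex_eq {x y : ZVertex d} (h1 : x.1.val = y.1.val) (h2 : x.2.val = y.2.val) : x = y :=
  Prod.ext (Fin.ext h1) (Fin.ext h2)

lemma adj_iff (hvert : ∀ g c, Edge.vert g c ∈ S)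
    (hhor : ∀ (r c : Fin (d-1)), Edge.horiz r c ∈ S ↔ HQ r.val c.val)
    (v1 : Fin (d-1)) (v2 : Fin d) (w1 : Fin (d-1)) (w2 : Fin d) :
    (latticeGraph d S).Adj (v1, v2) (w1, w2) ↔
      (v2.val = w2.val ∧ (w1.val = v1.val + 1 ∨ v1.val = w1.val + 1)) ∨
      (v1.val = w1.val ∧ ((w2.val = v2.val + 1 ∧ HQ v1.val v2.val) ∨
                    (v2.val = w2.val + 1 ∧ HQ v1.val w2.val))) := by
  have hne_iff : ((v1, v2) ≠ (w1, w2)) ↔ ¬(v1.val = w1.val ∧ v2.val = w2.val) := by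
    simp [Prod.ext_iff, Fin.ext_iff]
  constructor
  · rintro ⟨hne, e, heS, hv, hw⟩
    rw [hne_iff] at hne
    cases e with
    | vert g c =>
      simp only [incidentZ, Bool.and_eq_true, Bool.or_eq_true, beq_iff_eq] at hv hw
      left; omega
    | horiz rr cc =>
      simp only [incidentZ, Bool.and_eq_true, Bool.or_eq_true, beq_iff_eq] at hv hw
      have hQ : HQ rr.val cc.val := (hhor rr cc).mp heS
      right
      refine ⟨by omega, ?_⟩
      rcases hv.2 with h1 | h1 <;> rcases hw.2 with h2 | h2
      · omega
      · left; refine ⟨by omega, ?_⟩; rw [hv.1, h1]; exact hQ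
      · right; refine ⟨by omega, ?_⟩; rw [hv.1, h2]; exact hQ
      · omega
  · rintro (⟨hc, hr | hr⟩ | ⟨hr, ⟨hc, hQ⟩ | ⟨hc, hQ⟩⟩)
    · refine ⟨hne_iff.mpr (by omega),
        Edge.vert ⟨w1.val, lt_of_lt_of_le w1.isLt (Nat.sub_le d 1)⟩ v2, hvert _ _, ?_, ?_⟩
      all_goals simp only [incidentZ, Bool.and_eq_true, Bool.or_eq_true, beq_iff_eq]
      · exact ⟨trivial, Or.inr hr⟩
      · exact ⟨hc.symm, Or.inl trivial⟩
    · refine ⟨hne_iff.mpr (by omega),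
        Edge.vert ⟨v1.val, lt_of_lt_of_le v1.isLt (Nat.sub_le d 1)⟩ v2, hvert _ _, ?_, ?_⟩
      all_goals simp only [incidentZ, Bool.and_eq_true, Bool.or_eq_true, beq_iff_eq]
      · exact ⟨trivial, Or.inl trivial⟩
      · exact ⟨hc.symm, Or.inr hr⟩
    · have hlt : v2.val < d - 1 := by have := w2.isLt; omega
      refine ⟨hne_iff.mpr (by omega),
        Edge.horiz v1 ⟨v2.val, hlt⟩, (hhor _ _).mpr hQ, ?_, ?_⟩
      all_goals simp only [incidentZ, Bool.and_eq_true, Bool.or_eq_true, beq_iff_eq]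
      · exact ⟨trivial, Or.inl trivial⟩
      · exact ⟨hr.symm, Or.inr hc⟩
    · have hlt : w2.val < d - 1 := by have := v2.isLt; omega
      refine ⟨hne_iff.mpr (by omega),
        Edge.horiz v1 ⟨w2.val, hlt⟩, (hhor _ _).mpr hQ, ?_, ?_⟩
      all_goals simp only [incidentZ, Bool.and_eq_true, Bool.or_eq_true, beq_iff_eq]
      · exact ⟨trivial, Or.inr hc⟩
      · exact ⟨hr.symm, Or.inl trivial⟩

end AdjIff

section Master
open SimpleGraph
variable {d s : ℕ} {S : Finset (Edge d)} {HQ : ℕ → ℕ → Prop}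

/-- the gap/cut label of a dart -/
def lab {S : Finset (Edge d)} (dt : (latticeGraph d S).Dart) : ℕ ⊕ ℕ :=
  if dt.fst.2 = dt.snd.2 then Sum.inl (max dt.fst.1.val dt.snd.1.val)
  else Sum.inr (max dt.fst.2.val dt.snd.2.val)

def fRow (d : ℕ) (t : ℕ) (v : ZVertex d) : ZMod 2 := if t ≤ v.1.val then 1 else 0
def fCol (d : ℕ) (t : ℕ) (v : ZVertex d) : ZMod 2 := if t ≤ v.2.val then 1 else 0

lemma dart_cases (hvert : ∀ g c, Edge.vert g c ∈ S)
    (hhor : ∀ (r c : Fin (d-1)), Edge.horiz r c ∈ S ↔ HQ r.val c.val)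
    (dt : (latticeGraph d S).Dart) :
    (dt.fst.2 = dt.snd.2 ∧ (dt.snd.1.val = dt.fst.1.val + 1 ∨ dt.fst.1.val = dt.snd.1.val + 1)) ∨
    (dt.fst.1 = dt.snd.1 ∧ ((dt.snd.2.val = dt.fst.2.val + 1 ∧ HQ dt.fst.1.val dt.fst.2.val) ∨
       (dt.fst.2.val = dt.snd.2.val + 1 ∧ HQ dt.fst.1.val dt.snd.2.val))) := by
  have h := dt.adj
  rw [show dt.fst = (dt.fst.1, dt.fst.2) from rfl, show dt.snd = (dt.snd.1, dt.snd.2) from rfl,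
    adj_iff hvert hhor] at h
  rcases h with ⟨h1, h2⟩ | ⟨h1, h2⟩
  · exact Or.inl ⟨Fin.ext h1, h2⟩
  · exact Or.inr ⟨Fin.ext h1, h2⟩

lemma lab_inl_iff (hvert : ∀ g c, Edge.vert g c ∈ S)
    (hhor : ∀ (r c : Fin (d-1)), Edge.horiz r c ∈ S ↔ HQ r.val c.val)
    (dt : (latticeGraph d S).Dart) (t : ℕ) :
    fRow d t dt.fst ≠ fRow d t dt.snd ↔ lab dt = Sum.inl t := by
  rcases dart_cases hvert hhor dt with ⟨h1, h2⟩ | ⟨h1, h2⟩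
  · rw [lab, if_pos h1]
    simp only [fRow, Sum.inl.injEq]
    constructor
    · intro hne
      by_contra hne2
      apply hne
      have : (t ≤ dt.fst.1.val ↔ t ≤ dt.snd.1.val) := by omega
      split_ifs with hA hB hB <;> first | rfl | omega
    · intro ht
      have h3 : ¬ t ≤ min dt.fst.1.val dt.snd.1.val := by omega
      have h4 : t ≤ max dt.fst.1.val dt.snd.1.val := by omega
      rcases h2 with h2 | h2
      · rw [if_neg (by omega), if_pos (by omega)]; exact zero_ne_one
      · rw [if_pos (by omega), if_neg (by omega)]; exact one_ne_zero
  · have hcne : ¬ dt.fst.2 = dt.snd.2 := by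
      intro hc
      have : dt.fst.2.val = dt.snd.2.val := congrArg Fin.val hc
      omega
    rw [lab, if_neg hcne]
    simp only [fRow, h1]
    constructor
    · intro hne; exact absurd rfl hne
    · intro h; exact absurd h (by simp)

lemma lab_inr_iff (hvert : ∀ g c, Edge.vert g c ∈ S)
    (hhor : ∀ (r c : Fin (d-1)), Edge.horiz r c ∈ S ↔ HQ r.val c.val)
    (dt : (latticeGraph d S).Dart) (t : ℕ) :
    fCol d t dt.fst ≠ fCol d t dt.snd ↔ lab dt = Sum.inr t := by
  rcases dart_cases hvert hhor dt with ⟨h1, h2⟩ | ⟨h1, h2⟩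
  · rw [lab, if_pos h1]
    simp only [fCol, h1]
    constructor
    · intro hne; exact absurd rfl hne
    · intro h; exact absurd h (by simp)
  · have hcne : ¬ dt.fst.2 = dt.snd.2 := by
      intro hc
      have : dt.fst.2.val = dt.snd.2.val := congrArg Fin.val hc
      omega
    rw [lab, if_neg hcne]
    simp only [fCol, Sum.inr.injEq]
    constructor
    · intro hne
      by_contra hne2
      apply hne
      have : (t ≤ dt.fst.2.val ↔ t ≤ dt.snd.2.val) := by omega
      split_ifs with hA hB hB <;> first | rfl | omega
    · intro ht
      rcases h2 with ⟨h2, -⟩ | ⟨h2, -⟩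
      · rw [if_neg (by omega), if_pos (by omega)]; exact zero_ne_one
      · rw [if_pos (by omega), if_neg (by omega)]; exact one_ne_zero

lemma dart_edge_eq_of {V : Type*} {G : SimpleGraph V} (dt1 dt2 : G.Dart)
    (h : (dt1.fst = dt2.fst ∧ dt1.snd = dt2.snd) ∨ (dt1.fst = dt2.snd ∧ dt1.snd = dt2.fst)) :
    dt1.edge = dt2.edge := by
  show s(dt1.fst, dt1.snd) = s(dt2.fst, dt2.snd)
  rw [Sym2.eq_iff]
  exact h

end Master

section Master2
open SimpleGraph
variable {d s : ℕ} {S : Finset (Edge d)} {HQ : ℕ → ℕ → Prop}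

lemma cycle_length_lb (hvert : ∀ g c, Edge.vert g c ∈ S)
    (hhor : ∀ (r c : Fin (d-1)), Edge.horiz r c ∈ S ↔ HQ r.val c.val)
    (key : ℕ → ℕ → ℕ)
    (hkeyinj : ∀ r r' c, HQ r c → HQ r' c → key r c = key r' c → r = r')
    (hspan : ∀ rlo rhi clo chi r c r' c', rlo ≤ r → r ≤ rhi → rlo ≤ r' → r' ≤ rhi →
      clo ≤ c → c + 1 ≤ chi → clo ≤ c' → c' + 1 ≤ chi → HQ r c → HQ r' c' →
      key r c ≠ key r' c' → s + 2 ≤ (rhi - rlo) + (chi - clo))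
    {a : ZVertex d} (w : (latticeGraph d S).Walk a a) (hw : w.IsCycle) :
    2 * s + 4 ≤ w.length := by
  classical
  have hDC := dart_cases hvert hhor (S := S)
  -- min and max of rows and columns on the support
  set F : Finset (ZVertex d) := w.support.toFinset with hF
  have hFne : F.Nonempty := ⟨a, by simp [hF, Walk.start_mem_support]⟩
  set R : Finset ℕ := F.image (fun v => v.1.val) with hR
  set C : Finset ℕ := F.image (fun v => v.2.val) with hC
  have hRne : R.Nonempty := hFne.image _
  have hCne : C.Nonempty := hFne.image _
  set rlo := R.min' hRne with hrlo; set rhi := R.max' hRne with hrhi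
  set clo := C.min' hCne with hclo; set chi := C.max' hCne with hchi
  have hrB : ∀ x ∈ w.support, rlo ≤ x.1.val ∧ x.1.val ≤ rhi := by
    intro x hx
    have hxR : x.1.val ∈ R := Finset.mem_image_of_mem _ (List.mem_toFinset.mpr hx)
    exact ⟨R.min'_le _ hxR, R.le_max' _ hxR⟩
  have hcB : ∀ x ∈ w.support, clo ≤ x.2.val ∧ x.2.val ≤ chi := by
    intro x hx
    have hxC : x.2.val ∈ C := Finset.mem_image_of_mem _ (List.mem_toFinset.mpr hx)
    exact ⟨C.min'_le _ hxC, C.le_max' _ hxC⟩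
  -- counts
  set cnt : ℕ ⊕ ℕ → ℕ := fun ℓ => w.darts.countP (fun dt => decide (lab dt = ℓ)) with hcnt
  have hcntRow : ∀ t, cnt (Sum.inl t) =
      w.darts.countP (fun dt => decide (fRow d t dt.fst ≠ fRow d t dt.snd)) := by
    intro t
    apply List.countP_congr
    intro dt _
    simp [lab_inl_iff hvert hhor dt t]
  have hcntCol : ∀ t, cnt (Sum.inr t) =
      w.darts.countP (fun dt => decide (fCol d t dt.fst ≠ fCol d t dt.snd)) := by
    intro t
    apply List.countP_congr
    intro dt _
    simp [lab_inr_iff hvert hhor dt t]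
  have hEven : ∀ ℓ, 2 ∣ cnt ℓ := by
    rintro (t | t)
    · rw [hcntRow]; exact closed_walk_even _ w
    · rw [hcntCol]; exact closed_walk_even _ w
  -- two crossings of every intermediate row gap
  have hRow2 : ∀ t, rlo < t → t ≤ rhi → 2 ≤ cnt (Sum.inl t) := by
    intro t h1 h2
    obtain ⟨x, hxF, hxv⟩ := Finset.mem_image.mp (R.min'_mem hRne)
    obtain ⟨y, hyF, hyv⟩ := Finset.mem_image.mp (R.max'_mem hRne)
    have hx : x ∈ w.support := List.mem_toFinset.mp hxF
    have hy : y ∈ w.support := List.mem_toFinset.mp hyF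
    have hone : 1 ≤ cnt (Sum.inl t) := by
      rw [hcntRow]
      refine nonconst_one_le (fRow d t) w hx hy ?_
      rw [fRow, fRow, if_neg (by omega), if_pos (by omega)]
      exact zero_ne_one
    have := hEven (Sum.inl t)
    omega
  have hCol2 : ∀ t, clo < t → t ≤ chi → 2 ≤ cnt (Sum.inr t) := by
    intro t h1 h2
    obtain ⟨x, hxF, hxv⟩ := Finset.mem_image.mp (C.min'_mem hCne)
    obtain ⟨y, hyF, hyv⟩ := Finset.mem_image.mp (C.max'_mem hCne)
    have hx : x ∈ w.support := List.mem_toFinset.mp hxF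
    have hy : y ∈ w.support := List.mem_toFinset.mp hyF
    have hone : 1 ≤ cnt (Sum.inr t) := by
      rw [hcntCol]
      refine nonconst_one_le (fCol d t) w hx hy ?_
      rw [fCol, fCol, if_neg (by omega), if_pos (by omega)]
      exact zero_ne_one
    have := hEven (Sum.inr t)
    omega
  -- total length lower bound from the spans
  have hLen : 2 * (rhi - rlo) + 2 * (chi - clo) ≤ w.length := by
    set T : Finset (ℕ ⊕ ℕ) :=
      ((Finset.Ioc rlo rhi).image Sum.inl) ∪ ((Finset.Ioc clo chi).image Sum.inr) with hT
    have hdisj : Disjoint ((Finset.Ioc rlo rhi).image Sum.inl)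
        ((Finset.Ioc clo chi).image Sum.inr) := by
      rw [Finset.disjoint_left]
      rintro ℓ h1 h2
      obtain ⟨t1, -, rfl⟩ := Finset.mem_image.mp h1
      obtain ⟨t2, -, ht⟩ := Finset.mem_image.mp h2
      exact absurd ht (by simp)
    have hsum : ∑ ℓ ∈ T, cnt ℓ ≤ w.darts.length := sum_countP_le w.darts lab T
    rw [Walk.length_darts] at hsum
    rw [hT, Finset.sum_union hdisj, Finset.sum_image (by intro x _ y _ h; exact Sum.inl.inj h),
      Finset.sum_image (by intro x _ y _ h; exact Sum.inr.inj h)] at hsum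
    have hrowsum : 2 * (rhi - rlo) ≤ ∑ t ∈ Finset.Ioc rlo rhi, cnt (Sum.inl t) := by
      calc 2 * (rhi - rlo) = (Finset.Ioc rlo rhi).card • 2 := by rw [Nat.card_Ioc, smul_eq_mul]; ring
        _ ≤ ∑ t ∈ Finset.Ioc rlo rhi, cnt (Sum.inl t) := by
            apply Finset.card_nsmul_le_sum
            intro t ht
            rw [Finset.mem_Ioc] at ht
            exact hRow2 t ht.1 ht.2
    have hcolsum : 2 * (chi - clo) ≤ ∑ t ∈ Finset.Ioc clo chi, cnt (Sum.inr t) := by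
      calc 2 * (chi - clo) = (Finset.Ioc clo chi).card • 2 := by rw [Nat.card_Ioc, smul_eq_mul]; ring
        _ ≤ ∑ t ∈ Finset.Ioc clo chi, cnt (Sum.inr t) := by
            apply Finset.card_nsmul_le_sum
            intro t ht
            rw [Finset.mem_Ioc] at ht
            exact hCol2 t ht.1 ht.2
    omega
  -- nodup edges
  have hnodup : (w.darts.map SimpleGraph.Dart.edge).Nodup := hw.edges_nodup
  -- existence of a horizontal dart
  obtain ⟨dt0, hdt0mem, hdt0H⟩ : ∃ dt ∈ w.darts, dt.fst.2 ≠ dt.snd.2 := by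
    by_contra hcon
    push_neg at hcon
    -- all darts vertical: support in a single column
    have hcolconst := walk_const (fun v : ZVertex d => v.2) w hcon
    have hdne : w.darts ≠ [] := by
      have h3 := hw.three_le_length
      intro h
      rw [← Walk.length_darts, h] at h3
      simp at h3
    obtain ⟨dt0, hdt0⟩ := List.exists_mem_of_ne_nil _ hdne
    set t0 := max dt0.fst.1.val dt0.snd.1.val with ht0
    have hlab0 : lab dt0 = Sum.inl t0 := by rw [lab, if_pos (hcon dt0 hdt0)]
    have h1 : 1 ≤ cnt (Sum.inl t0) := by
      rw [hcnt]
      refine List.countP_pos_iff.mpr ⟨dt0, hdt0, by simp [hlab0]⟩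
    have hle1 : cnt (Sum.inl t0) ≤ 1 := by
      apply countP_le_one_of _ _ hnodup
      intro dt1 h1m dt2 h2m hp1 hp2
      simp only [decide_eq_true_eq] at hp1 hp2
      -- facts about dt1 and dt2
      have hfacts : ∀ dt ∈ w.darts, lab dt = Sum.inl t0 →
          dt.fst.2.val = a.2.val ∧ dt.snd.2.val = a.2.val ∧
          max dt.fst.1.val dt.snd.1.val = t0 ∧
          (dt.snd.1.val = dt.fst.1.val + 1 ∨ dt.fst.1.val = dt.snd.1.val + 1) := by
        intro dt hm hl
        have hv := hcon dt hm
        have hrow : (dt.snd.1.val = dt.fst.1.val + 1 ∨ dt.fst.1.val = dt.snd.1.val + 1) := by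
          rcases hDC dt with ⟨-, h⟩ | ⟨-, h⟩
          · exact h
          · exfalso
            have := congrArg Fin.val hv
            omega
        have hmax : max dt.fst.1.val dt.snd.1.val = t0 := by
          rw [lab, if_pos hv] at hl
          exact Sum.inl.inj hl
        have hc1 : dt.fst.2 = a.2 := hcolconst _ (w.dart_fst_mem_support_of_mem_darts hm)
        have hc2 : dt.snd.2 = a.2 := hcolconst _ (w.dart_snd_mem_support_of_mem_darts hm)
        exact ⟨congrArg Fin.val hc1, congrArg Fin.val hc2, hmax, hrow⟩
      obtain ⟨ha1, ha2, hm1, hr1⟩ := hfacts dt1 h1m hp1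
      obtain ⟨hb1, hb2, hm2, hr2⟩ := hfacts dt2 h2m hp2
      apply dart_edge_eq_of
      rcases hr1 with hr1 | hr1 <;> rcases hr2 with hr2 | hr2
      · exact Or.inl ⟨vertex_eq (by omega) (by omega), vertex_eq (by omega) (by omega)⟩
      · exact Or.inr ⟨vertex_eq (by omega) (by omega), vertex_eq (by omega) (by omega)⟩
      · exact Or.inr ⟨vertex_eq (by omega) (by omega), vertex_eq (by omega) (by omega)⟩
      · exact Or.inl ⟨vertex_eq (by omega) (by omega), vertex_eq (by omega) (by omega)⟩
    have := hEven (Sum.inl t0)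
    omega
  -- facts about horizontal darts
  have hHfacts : ∀ dt ∈ w.darts, dt.fst.2 ≠ dt.snd.2 →
      dt.fst.1.val = dt.snd.1.val ∧
      HQ dt.fst.1.val (min dt.fst.2.val dt.snd.2.val) ∧
      max dt.fst.2.val dt.snd.2.val = min dt.fst.2.val dt.snd.2.val + 1 := by
    intro dt _ hne
    rcases hDC dt with ⟨h1, -⟩ | ⟨h1, h2⟩
    · exact absurd h1 hne
    rcases h2 with ⟨h2, h3⟩ | ⟨h2, h3⟩
    · refine ⟨congrArg Fin.val h1, ?_, by omega⟩
      rwa [show min dt.fst.2.val dt.snd.2.val = dt.fst.2.val by omega]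
    · refine ⟨congrArg Fin.val h1, ?_, by omega⟩
      rwa [show min dt.fst.2.val dt.snd.2.val = dt.snd.2.val by omega]
  set k0 := key dt0.fst.1.val (min dt0.fst.2.val dt0.snd.2.val) with hk0
  by_cases hsame : ∀ dt ∈ w.darts, dt.fst.2 ≠ dt.snd.2 →
      key dt.fst.1.val (min dt.fst.2.val dt.snd.2.val) = k0
  · -- all horizontal darts share the key: impossible
    exfalso
    set t0 := max dt0.fst.2.val dt0.snd.2.val with ht0
    have hlab0 : lab dt0 = Sum.inr t0 := by rw [lab, if_neg hdt0H]
    have h1 : 1 ≤ cnt (Sum.inr t0) := by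
      rw [hcnt]
      exact List.countP_pos_iff.mpr ⟨dt0, hdt0mem, by simp [hlab0]⟩
    have hle1 : cnt (Sum.inr t0) ≤ 1 := by
      apply countP_le_one_of _ _ hnodup
      intro dt1 h1m dt2 h2m hp1 hp2
      simp only [decide_eq_true_eq] at hp1 hp2
      have hfacts : ∀ dt ∈ w.darts, lab dt = Sum.inr t0 →
          dt.fst.1.val = dt.snd.1.val ∧ HQ dt.fst.1.val (t0 - 1) ∧
          min dt.fst.2.val dt.snd.2.val = t0 - 1 ∧
          max dt.fst.2.val dt.snd.2.val = t0 ∧ 1 ≤ t0 ∧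
          key dt.fst.1.val (t0 - 1) = k0 := by
        intro dt hm hl
        have hne : dt.fst.2 ≠ dt.snd.2 := by
          intro hc
          rw [lab, if_pos hc] at hl
          exact absurd hl (by simp)
        obtain ⟨hr, hq, hmm⟩ := hHfacts dt hm hne
        have hmax : max dt.fst.2.val dt.snd.2.val = t0 := by
          rw [lab, if_neg hne] at hl
          exact Sum.inr.inj hl
        have hmin : min dt.fst.2.val dt.snd.2.val = t0 - 1 := by omega
        refine ⟨hr, by rwa [hmin] at hq, hmin, hmax, by omega, by rw [← hmin]; exact hsame dt hm hne⟩
      obtain ⟨ha1, haQ, ha2, ha3, ha4, ha5⟩ := hfacts dt1 h1m hp1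
      obtain ⟨hb1, hbQ, hb2, hb3, hb4, hb5⟩ := hfacts dt2 h2m hp2
      have hrow : dt1.fst.1.val = dt2.fst.1.val :=
        hkeyinj _ _ _ haQ hbQ (by rw [ha5, hb5])
      apply dart_edge_eq_of
      rcases eq_or_ne dt1.fst.2.val dt2.fst.2.val with hcc | hcc
      · exact Or.inl ⟨vertex_eq (by omega) (by omega), vertex_eq (by omega) (by omega)⟩
      · exact Or.inr ⟨vertex_eq (by omega) (by omega), vertex_eq (by omega) (by omega)⟩
    have := hEven (Sum.inr t0)
    omega
  · -- two horizontal darts with different keys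
    push_neg at hsame
    obtain ⟨dt1, h1m, h1H, h1k⟩ := hsame
    obtain ⟨hr0, hq0, hm0⟩ := hHfacts dt0 hdt0mem hdt0H
    obtain ⟨hr1, hq1, hm1⟩ := hHfacts dt1 h1m h1H
    -- bounds for both darts
    have hb0f := hrB _ (w.dart_fst_mem_support_of_mem_darts hdt0mem)
    have hb0cf := hcB _ (w.dart_fst_mem_support_of_mem_darts hdt0mem)
    have hb0cs := hcB _ (w.dart_snd_mem_support_of_mem_darts hdt0mem)
    have hb1f := hrB _ (w.dart_fst_mem_support_of_mem_darts h1m)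
    have hb1cf := hcB _ (w.dart_fst_mem_support_of_mem_darts h1m)
    have hb1cs := hcB _ (w.dart_snd_mem_support_of_mem_darts h1m)
    have hmain : s + 2 ≤ (rhi - rlo) + (chi - clo) := by
      apply hspan rlo rhi clo chi dt1.fst.1.val (min dt1.fst.2.val dt1.snd.2.val)
        dt0.fst.1.val (min dt0.fst.2.val dt0.snd.2.val) (by omega) (by omega) (by omega)
        (by omega) (by omega) (by omega) (by omega) (by omega) hq1 hq0 h1k
    omega

end Master2

section Upper
open SimpleGraph
variable {d s : ℕ} {S : Finset (Edge d)} {HQ : ℕ → ℕ → Prop}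

lemma vadj (hvert : ∀ g c, Edge.vert g c ∈ S) {r1 r2 : ℕ} (h1 : r1 < d - 1) (h2 : r2 < d - 1)
    (hr : r2 = r1 + 1) (c : Fin d) :
    (latticeGraph d S).Adj (⟨r1, h1⟩, c) (⟨r2, h2⟩, c) := by
  refine ⟨fun h => ?_, Edge.vert ⟨r2, by omega⟩ c, hvert _ _, ?_, ?_⟩
  · have := congrArg (fun x : ZVertex d => x.1.val) h
    simp at this
    omega
  · simp only [incidentZ, Bool.and_eq_true, Bool.or_eq_true, beq_iff_eq]
    exact ⟨trivial, Or.inr (by omega)⟩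
  · simp only [incidentZ, Bool.and_eq_true, Bool.or_eq_true, beq_iff_eq]
    exact ⟨trivial, Or.inl trivial⟩

def colWalk (hvert : ∀ g c, Edge.vert g c ∈ S) (c : Fin d) :
    ∀ (n r : ℕ) (h : r + n < d - 1),
      (latticeGraph d S).Walk (⟨r, by omega⟩, c) (⟨r + n, h⟩, c)
  | 0, r, h => Walk.nil.copy rfl (vertex_eq (show r = r + 0 by omega) rfl)
  | (n+1), r, h =>
      Walk.cons (vadj hvert (by omega) (by omega) rfl c)
        ((colWalk hvert c n (r+1) (by omega)).copy rfl
          (vertex_eq (show r+1+n = r+(n+1) by omega) rfl))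

lemma colWalk_length (hvert : ∀ g c, Edge.vert g c ∈ S) (c : Fin d) :
    ∀ (n r : ℕ) (h : r + n < d - 1), (colWalk hvert c n r h).length = n
  | 0, r, h => by simp [colWalk]
  | (n+1), r, h => by
      simp [colWalk, colWalk_length hvert c n (r+1)]

lemma colWalk_support_map (hvert : ∀ g c, Edge.vert g c ∈ S) (c : Fin d) :
    ∀ (n r : ℕ) (h : r + n < d - 1),
      ((colWalk hvert c n r h).support.map (fun x : ZVertex d => x.1.val)) =
        List.range' r (n+1) := by
  intro n
  induction n with
  | zero => intro r h; simp [colWalk]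
  | succ n ih =>
    intro r h
    rw [colWalk, Walk.support_cons, Walk.support_copy, List.map_cons, ih (r+1) (by omega)]
    conv_rhs => rw [List.range'_succ]

lemma colWalk_support_col (hvert : ∀ g c, Edge.vert g c ∈ S) (c : Fin d) :
    ∀ (n r : ℕ) (h : r + n < d - 1), ∀ x ∈ (colWalk hvert c n r h).support, x.2 = c := by
  intro n
  induction n with
  | zero => intro r h x hx; simp [colWalk] at hx; subst hx; rfl
  | succ n ih =>
    intro r h x hx
    rw [colWalk, Walk.support_cons, Walk.support_copy] at hx
    rcases List.mem_cons.mp hx with rfl | hx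
    · rfl
    · exact ih (r+1) (by omega) x hx

lemma exists_short_cycle (hvert : ∀ g c, Edge.vert g c ∈ S)
    (hhor : ∀ (r c : Fin (d-1)), Edge.horiz r c ∈ S ↔ HQ r.val c.val)
    (r1 c0 : ℕ) (hQ1 : HQ r1 c0) (hQ2 : HQ (r1 + (s+1)) c0)
    (hr : r1 + (s+1) < d - 1) (hc : c0 + 1 < d) :
    ∃ (a : ZVertex d) (w : (latticeGraph d S).Walk a a), w.IsCycle ∧ w.length = 2*s+4 := by
  have hc0 : c0 < d := by omega
  set cA : Fin d := ⟨c0, hc0⟩ with hcA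
  set cB : Fin d := ⟨c0+1, hc⟩ with hcB
  set u : ZVertex d := (⟨r1, by omega⟩, cA) with hu
  set v : ZVertex d := (⟨r1, by omega⟩, cB) with hv
  set u2 : ZVertex d := (⟨r1+(s+1), hr⟩, cA) with hu2
  set v2 : ZVertex d := (⟨r1+(s+1), hr⟩, cB) with hv2
  set w1 : (latticeGraph d S).Walk v v2 := colWalk hvert cB (s+1) r1 hr with hw1
  set w3 : (latticeGraph d S).Walk u2 u := (colWalk hvert cA (s+1) r1 hr).reverse with hw3
  have badj : (latticeGraph d S).Adj v2 u2 := by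
    rw [hv2, hu2, adj_iff hvert hhor]
    right
    exact ⟨rfl, Or.inr ⟨rfl, hQ2⟩⟩
  have tadj : (latticeGraph d S).Adj u v := by
    rw [hu, hv, adj_iff hvert hhor]
    right
    exact ⟨rfl, Or.inl ⟨rfl, hQ1⟩⟩
  set p : (latticeGraph d S).Walk v u := w1.append (Walk.cons badj w3) with hp
  -- support facts
  have hw1sup : ∀ x ∈ w1.support, x.2 = cB := colWalk_support_col hvert cB (s+1) r1 hr
  have hw3sup : ∀ x ∈ w3.support, x.2 = cA := by
    intro x hx
    rw [hw3, Walk.support_reverse, List.mem_reverse] at hx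
    exact colWalk_support_col hvert cA (s+1) r1 hr x hx
  have hw1nd : w1.support.Nodup := by
    apply List.Nodup.of_map (fun x : ZVertex d => x.1.val)
    rw [hw1, colWalk_support_map]
    exact List.nodup_range' 1 Nat.one_pos
  have hw3nd : w3.support.Nodup := by
    rw [hw3, Walk.support_reverse]
    rw [List.nodup_reverse]
    apply List.Nodup.of_map (fun x : ZVertex d => x.1.val)
    rw [colWalk_support_map]
    exact List.nodup_range' 1 Nat.one_pos
  have hpsup : p.support = w1.support ++ w3.support := by
    rw [hp, Walk.support_append, Walk.support_cons]
    rfl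
  refine ⟨u, Walk.cons tadj p, ?_, ?_⟩
  · rw [Walk.cons_isCycle_iff]
    constructor
    · rw [Walk.isPath_def, hpsup, List.nodup_append]
      refine ⟨hw1nd, hw3nd, ?_⟩
      intro x hx1 y hx3 hxy; subst hxy
      have h1 := hw1sup x hx1
      have h3 := hw3sup x hx3
      rw [h1] at h3
      have := congrArg Fin.val h3
      simp [hcA, hcB] at this
    · intro hmem
      rw [hp, Walk.edges_append, Walk.edges_cons] at hmem
      rcases List.mem_append.mp hmem with hm | hm
      · have := hw1sup u (w1.fst_mem_support_of_mem_edges hm)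
        have := congrArg Fin.val this
        simp [hcA, hcB, hu] at this
      · rcases List.mem_cons.mp hm with hm | hm
        · rw [Sym2.eq_iff] at hm
          rcases hm with ⟨h1, -⟩ | ⟨h1, -⟩
          · have := congrArg (fun x : ZVertex d => x.1.val) h1
            simp [hu, hv2] at this
          · have := congrArg (fun x : ZVertex d => x.1.val) h1
            simp [hu, hu2] at this
        · have := hw3sup v (w3.snd_mem_support_of_mem_edges hm)
          have := congrArg Fin.val this
          simp [hcA, hcB, hv] at this
  · rw [Walk.length_cons, hp, Walk.length_append, Walk.length_cons, hw1, hw3,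
      Walk.length_reverse, colWalk_length, colWalk_length]
    omega

end Upper

section Final
open SimpleGraph
variable {d s : ℕ} {S : Finset (Edge d)} {HQ : ℕ → ℕ → Prop}

lemma girth_eq_of (hvert : ∀ g c, Edge.vert g c ∈ S)
    (hhor : ∀ (r c : Fin (d-1)), Edge.horiz r c ∈ S ↔ HQ r.val c.val)
    (key : ℕ → ℕ → ℕ)
    (hkeyinj : ∀ r r' c, HQ r c → HQ r' c → key r c = key r' c → r = r')
    (hspan : ∀ rlo rhi clo chi r c r' c', rlo ≤ r → r ≤ rhi → rlo ≤ r' → r' ≤ rhi →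
      clo ≤ c → c + 1 ≤ chi → clo ≤ c' → c' + 1 ≤ chi → HQ r c → HQ r' c' →
      key r c ≠ key r' c' → s + 2 ≤ (rhi - rlo) + (chi - clo))
    (r1 c0 : ℕ) (hQ1 : HQ r1 c0) (hQ2 : HQ (r1 + (s+1)) c0)
    (hrange : r1 + (s+1) < d - 1) (hcrange : c0 + 1 < d) :
    ((latticeGraph d S).girth : ℕ∞) = ((2 * s + 4 : ℕ) : ℕ∞) := by
  obtain ⟨a, w, hw, hlen⟩ := exists_short_cycle hvert hhor r1 c0 hQ1 hQ2 hrange hcrange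
  have hle : (latticeGraph d S).egirth ≤ ((2 * s + 4 : ℕ) : ℕ∞) := by
    rw [← hlen, SimpleGraph.egirth]
    exact iInf₂_le_of_le a w (iInf_le _ hw)
  have hge : ((2 * s + 4 : ℕ) : ℕ∞) ≤ (latticeGraph d S).egirth := by
    rw [SimpleGraph.le_egirth]
    intro b w' hw'
    exact_mod_cast cycle_length_lb hvert hhor key hkeyinj hspan w' hw'
  have hegirth : (latticeGraph d S).egirth = ((2 * s + 4 : ℕ) : ℕ∞) := le_antisymm hle hge
  rw [SimpleGraph.girth, hegirth, ENat.toNat_coe]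

end Final

theorem girth_diluted' (s d : ℕ) (hs : 1 ≤ s) (hd : 2 * s + 4 ≤ d) :
    ((latticeGraph d (dilutedDH d s)).girth : ℕ∞) = ((2 * s + 4 : ℕ) : ℕ∞) ∧
    ((latticeGraph d (dilutedCH d s)).girth = ((2 * s + 4 : ℕ) : ℕ∞)) := by
  constructor
  · -- diagonal pattern
    have hvert : ∀ g c, Edge.vert g c ∈ dilutedDH d s := by
      intro g c; rw [dilutedDH, Finset.mem_filter]; simp [keepDH]
    have hhor : ∀ (r c : Fin (d-1)), Edge.horiz r c ∈ dilutedDH d s ↔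
        (fun r c : ℕ => (r + c + 1) % (s+1) = 0) r.val c.val := by
      intro r c; rw [dilutedDH, Finset.mem_filter]; simp [keepDH]
    refine girth_eq_of (HQ := fun r c : ℕ => (r + c + 1) % (s+1) = 0) hvert hhor (fun r c => r + c) ?_ ?_ 0 s ?_ ?_ (by omega) (by omega)
    · intro r r' c _ _ h; omega
    · intro rlo rhi clo chi r c r' c' h1 h2 h3 h4 h5 h6 h7 h8 hq hq' hk
      have d1 : (s+1) ∣ (r+c+1) := Nat.dvd_of_mod_eq_zero hq
      have d2 : (s+1) ∣ (r'+c'+1) := Nat.dvd_of_mod_eq_zero hq'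
      rcases Nat.lt_or_ge (r+c) (r'+c') with hlt | hge
      · have := Nat.le_of_dvd (by omega) (Nat.dvd_sub d2 d1)
        omega
      · have hne : r' + c' < r + c := by omega
        have := Nat.le_of_dvd (by omega) (Nat.dvd_sub d1 d2)
        omega
    · show (0 + s + 1) % (s + 1) = 0
      rw [show 0 + s + 1 = (s+1) * 1 by ring]
      exact Nat.mul_mod_right _ _
    · show (0 + (s+1) + s + 1) % (s + 1) = 0
      rw [show 0 + (s+1) + s + 1 = (s+1) * 2 by ring]
      exact Nat.mul_mod_right _ _
  · -- Cartesian pattern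
    have hvert : ∀ g c, Edge.vert g c ∈ dilutedCH d s := by
      intro g c; rw [dilutedCH, Finset.mem_filter]; simp [keepCH]
    have hhor : ∀ (r c : Fin (d-1)), Edge.horiz r c ∈ dilutedCH d s ↔
        (fun r _ : ℕ => r % (s+1) = 1 % (s+1)) r.val c.val := by
      intro r c; rw [dilutedCH, Finset.mem_filter]; simp [keepCH]
    refine girth_eq_of (HQ := fun r _ : ℕ => r % (s+1) = 1 % (s+1)) hvert hhor (fun r _ => r) ?_ ?_ 1 0 ?_ ?_ (by omega) (by omega)
    · intro r r' c _ _ h; exact h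
    · intro rlo rhi clo chi r c r' c' h1 h2 h3 h4 h5 h6 h7 h8 hq hq' hk
      have hmod : r % (s+1) = r' % (s+1) := by rw [hq, hq']
      rcases Nat.lt_or_ge r r' with hlt | hge
      · have := Nat.le_of_dvd (by omega) ((Nat.modEq_iff_dvd' (by omega)).mp hmod)
        omega
      · have hne : r' < r := by omega
        have := Nat.le_of_dvd (by omega) ((Nat.modEq_iff_dvd' (by omega)).mp hmod.symm)
        omega
    · rfl
    · exact Nat.add_mod_right 1 (s+1)

/-- For a sparsification ratio `s ≥ 1` and a surface-code distance
`d` large enough that the diluted lattice contains at least one complete plaquette of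
the sparsified pattern (`d ≥ 2s + 4`), the `s`-diluted lattice obtained by diagonal or
Cartesian `s`-sparsification has girth exactly `2s + 4`. -/
theorem girth_diluted (s d : ℕ) (hs : 1 ≤ s) (hd : 2 * s + 4 ≤ d) :
    (latticeGraph d (dilutedDH d s)).girth = ((2 * s + 4 : ℕ) : ℕ∞) ∧
    (latticeGraph d (dilutedCH d s)).girth = ((2 * s + 4 : ℕ) : ℕ∞) := by
  exact girth_diluted' s d hs hd
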